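/- The rearranged image system equals the original: with y₃ > 0, y^I = (y₁,y₂,−y₃), f ∈ ℝ³, f_{xy} = (f₁,f₂,0), f^I = (f₁,f₂,−f₃), the sum u^S + u^D + u^{L1} + u^{L2}, where u^S = J(x,y)f_{xy} − J(x,y^I)f_{xy}, u^D = (x₃∇_x − ê₃)[G^D(x,y^I)·(y₃(−f₁,−f₂,f₃))], u^{L1} = −½(x₃∇_x − ê₃)[G^S(x,y)f₃ − G^S(x,y^I)f₃], u^{L2} = ½∇_x[G^S(x,y)f₃y₃ − G^S(x,y^I)f₃y₃], equals J(x,y)f − J(x,y^I)f^I − (x₃∇_xφ − φê₃) with φ(x) = G^S(x,y^I)(−f₃) + G^D(x,y^I)·(y₃f^I), for all x ∉ {y, y^I}. -/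

import Mathlib

noncomputable section
open scoped Real

/-- Points in ℝ³ with the Euclidean norm. -/
abbrev E3 := EuclideanSpace ℝ (Fin 3)

/-- Build a point of ℝ³ from three coordinates. -/
def mk3 (a b c : ℝ) : E3 := (WithLp.equiv 2 (Fin 3 → ℝ)).symm ![a, b, c]

/-- Partial derivative in the i-th coordinate direction. -/
def pd (i : Fin 3) (f : E3 → ℝ) (x : E3) : ℝ :=
  fderiv ℝ f x (EuclideanSpace.single i 1)

/-- Laplacian. -/
def lap (f : E3 → ℝ) (x : E3) : ℝ := ∑ i : Fin 3, pd i (pd i f) x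

/-- Laplace monopole kernel G^S(x,y) = 1/(4π‖x−y‖). -/
def GS (x y : E3) : ℝ := 1 / (4 * Real.pi * ‖x - y‖)

/-- Laplace dipole kernel G^D(x,y) = (x−y)/(4π‖x−y‖³), j-th component. -/
def GD (x y : E3) (j : Fin 3) : ℝ := (x j - y j) / (4 * Real.pi * ‖x - y‖ ^ 3)

/-- Stokeslet (unit viscosity), (i,j) entry. -/
def J (x y : E3) (i j : Fin 3) : ℝ :=
  (1 / (8 * Real.pi)) *
    ((if i = j then (1 : ℝ) else 0) / ‖x - y‖ +
      (x i - y i) * (x j - y j) / ‖x - y‖ ^ 3)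

/-- Q(x,y) = ∇ₓ G^D(x,y), entries Q_{ij} = ∂_{x_i} G^D_j. -/
def Q (x y : E3) (i j : Fin 3) : ℝ := pd i (fun x => GD x y j) x

/-- Image point below the wall x₃ = 0. -/
def yI (y : E3) : E3 := mk3 (y 0) (y 1) (-(y 2))

/-- Image force. -/
def fI (f : Fin 3 → ℝ) : Fin 3 → ℝ := ![f 0, f 1, -(f 2)]

/-! The dipole part of `u^D` cancels the dipole part of `φ`, because `(-f₁, -f₂, f₃) = -f^I`.
The rest is governed by the Stokeslet identity
`J(x,y) e_j = ½ (e_j G^S(x,y) - (x_j - y_j) ∇ₓG^S(x,y))`, applied at `y` and at `y^I`: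
since `x₃ - y^I₃ = x₃ + y₃`, the monopole terms `u^{L1} + u^{L2}` and the `G^S` part of `φ`
combine into `f₃ (J(x,y) + J(x,y^I)) e₃`, which is exactly what separates `f` and `f^I` from
`f_{xy}` in the Stokeslet terms. -/

section InnerProductSpace

variable {F : Type*} [NormedAddCommGroup F] [InnerProductSpace ℝ F] {x : F} (y : F)

theorem hasFDerivAt_norm_sq_sub :
    HasFDerivAt (fun x => ‖x - y‖ ^ 2) (2 • innerSL ℝ (x - y)) x := by
  simpa using ((hasFDerivAt_id x).sub_const y).norm_sq

theorem differentiableAt_norm_sub (h : x ≠ y) : DifferentiableAt ℝ (fun x => ‖x - y‖) x :=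
  (differentiableAt_id.sub_const y).norm ℝ (sub_ne_zero.mpr h)

end InnerProductSpace

section PartialDerivative

variable {f g : E3 → ℝ} {x : E3} (i : Fin 3)

theorem pd_add (hf : DifferentiableAt ℝ f x) (hg : DifferentiableAt ℝ g x) :
    pd i (fun x => f x + g x) x = pd i f x + pd i g x := by
  simp only [pd, fderiv_fun_add hf hg, add_apply]

theorem pd_sub (hf : DifferentiableAt ℝ f x) (hg : DifferentiableAt ℝ g x) :
    pd i (fun x => f x - g x) x = pd i f x - pd i g x := by
  simp only [pd, fderiv_fun_sub hf hg, sub_apply]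

theorem pd_mul_const (hf : DifferentiableAt ℝ f x) (c : ℝ) :
    pd i (fun x => f x * c) x = pd i f x * c := by
  rw [pd, pd, fderiv_mul_const hf, smul_apply, smul_eq_mul, mul_comm]

theorem pd_sum {ι : Type*} {s : Finset ι} {F : ι → E3 → ℝ}
    (hF : ∀ j ∈ s, DifferentiableAt ℝ (F j) x) :
    pd i (fun x => ∑ j ∈ s, F j x) x = ∑ j ∈ s, pd i (F j) x := by
  simp only [pd, fderiv_fun_sum hF, sum_apply]

theorem pd_comp_of_hasDerivAt {φ : ℝ → ℝ} {φ' : ℝ} (hφ : HasDerivAt φ φ' (f x))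
    (hf : DifferentiableAt ℝ f x) :
    pd i (fun x => φ (f x)) x = φ' * pd i f x := by
  have hφf : HasFDerivAt (fun x => φ (f x)) (φ' • fderiv ℝ f x) x :=
    hφ.comp_hasFDerivAt x hf.hasFDerivAt
  rw [pd, pd, hφf.fderiv, smul_apply, smul_eq_mul]

theorem pd_norm_sq_sub (y : E3) : pd i (fun x => ‖x - y‖ ^ 2) x = 2 * (x i - y i) := by
  rw [pd, (hasFDerivAt_norm_sq_sub y).fderiv]
  simp [EuclideanSpace.inner_single_right]

theorem pd_norm_sub {y : E3} (h : x ≠ y) : pd i (fun x => ‖x - y‖) x = (x i - y i) / ‖x - y‖ := by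
  have hpos : 0 < ‖x - y‖ := norm_pos_iff.mpr (sub_ne_zero.mpr h)
  have hsqrt : (fun x : E3 => ‖x - y‖) = fun x => √(‖x - y‖ ^ 2) := by
    funext z
    rw [Real.sqrt_sq (norm_nonneg _)]
  rw [hsqrt, pd_comp_of_hasDerivAt i (Real.hasDerivAt_sqrt (by positivity))
    (hasFDerivAt_norm_sq_sub y).differentiableAt, pd_norm_sq_sub, Real.sqrt_sq hpos.le]
  field_simp

end PartialDerivative

section Kernels

variable {x y : E3}

theorem differentiableAt_GS (h : x ≠ y) : DifferentiableAt ℝ (fun x => GS x y) x := by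
  have hn : ‖x - y‖ ≠ 0 := norm_ne_zero_iff.mpr (sub_ne_zero.mpr h)
  have := differentiableAt_norm_sub y h
  unfold GS
  fun_prop (disch := positivity)

theorem differentiableAt_GD (h : x ≠ y) (j : Fin 3) : DifferentiableAt ℝ (fun x => GD x y j) x := by
  have hn : ‖x - y‖ ≠ 0 := norm_ne_zero_iff.mpr (sub_ne_zero.mpr h)
  have := differentiableAt_norm_sub y h
  unfold GD
  fun_prop (disch := positivity)

theorem pd_GS (h : x ≠ y) (i : Fin 3) : pd i (fun x => GS x y) x = -GD x y i := by
  have hn : ‖x - y‖ ≠ 0 := norm_ne_zero_iff.mpr (sub_ne_zero.mpr h)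
  have hGS : (fun x => GS x y) = fun x => (fun t => (4 * π)⁻¹ * t⁻¹) ‖x - y‖ := by
    funext z
    rw [GS, one_div, mul_inv]
  rw [hGS, pd_comp_of_hasDerivAt (φ := fun t => (4 * π)⁻¹ * t⁻¹) (f := fun x => ‖x - y‖) i
    ((hasDerivAt_inv hn).const_mul _)
    (differentiableAt_norm_sub y h), pd_norm_sub i h, GD]
  field_simp

theorem J_eq_GS_sub_pd_GS (h : x ≠ y) (i j : Fin 3) :
    J x y i j = (1 / 2) * ((if i = j then 1 else 0) * GS x y - (x j - y j) * pd i (fun x => GS x y) x) := by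
  have hn : ‖x - y‖ ≠ 0 := norm_ne_zero_iff.mpr (sub_ne_zero.mpr h)
  rw [pd_GS h, J, GS, GD]
  field_simp
  ring

theorem pd_GD_dotProduct (h : x ≠ y) (i : Fin 3) (c : Fin 3 → ℝ) :
    pd i (fun x => ∑ j : Fin 3, GD x y j * c j) x = ∑ j : Fin 3, Q x y i j * c j := by
  rw [pd_sum i fun j _ => (differentiableAt_GD h j).mul_const (c j)]
  simp only [pd_mul_const i (differentiableAt_GD h _), Q]

end Kernels

theorem yI_apply (y : E3) (j : Fin 3) : yI y j = ![y 0, y 1, -(y 2)] j := rfl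

theorem stmt11_general (y : E3) (f : Fin 3 → ℝ) :
    ∀ x : E3, x ≠ y → x ≠ yI y → ∀ i : Fin 3,
      -- u^S
      ((∑ j : Fin 3, J x y i j * (![f 0, f 1, 0] j))
        - (∑ j : Fin 3, J x (yI y) i j * (![f 0, f 1, 0] j)))
      -- u^D
      + (x 2 * pd i (fun x => ∑ j : Fin 3,
            GD x (yI y) j * (y 2 * (![-(f 0), -(f 1), f 2] j))) x
         - (∑ j : Fin 3, GD x (yI y) j * (y 2 * (![-(f 0), -(f 1), f 2] j)))
           * (if i = 2 then (1 : ℝ) else 0))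
      -- u^{L1}
      + (-(1 / 2) * (x 2 * pd i (fun x => GS x y * f 2 - GS x (yI y) * f 2) x
          - (GS x y * f 2 - GS x (yI y) * f 2) * (if i = 2 then (1 : ℝ) else 0)))
      -- u^{L2}
      + ((1 / 2) * pd i (fun x => GS x y * (f 2 * y 2) - GS x (yI y) * (f 2 * y 2)) x)
      =
      -- original image system
      (∑ j : Fin 3, J x y i j * f j) - (∑ j : Fin 3, J x (yI y) i j * fI f j)
      - (x 2 * pd i (fun x =>
            GS x (yI y) * (-(f 2)) + ∑ j : Fin 3, GD x (yI y) j * (y 2 * fI f j)) x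
         - (GS x (yI y) * (-(f 2)) + ∑ j : Fin 3, GD x (yI y) j * (y 2 * fI f j))
           * (if i = 2 then (1 : ℝ) else 0)) := by
  intro x hxy hxI i
  have hGS := differentiableAt_GS hxy
  have hGSI := differentiableAt_GS hxI
  have hGD : DifferentiableAt ℝ (fun x => ∑ j : Fin 3, GD x (yI y) j * (y 2 * fI f j)) x :=
    .fun_sum fun j _ => (differentiableAt_GD hxI j).mul_const _
  rw [pd_GD_dotProduct hxI, pd_add i (hGSI.mul_const _) hGD, pd_GD_dotProduct hxI,
    pd_sub i (hGS.mul_const _) (hGSI.mul_const _), pd_sub i (hGS.mul_const _) (hGSI.mul_const _)]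
  simp only [pd_mul_const i hGS, pd_mul_const i hGSI, J_eq_GS_sub_pd_GS hxy,
    J_eq_GS_sub_pd_GS hxI, Fin.sum_univ_three, fI, yI_apply,
    Matrix.cons_val_zero, Matrix.cons_val_one, Matrix.cons_val_two, Matrix.head_cons,
    Matrix.tail_cons]
  ring

/-- The rearranged (neutral) image system equals the original image system. -/
theorem stmt11 (y : E3) (hy : y 2 > 0) (f : Fin 3 → ℝ) :
    ∀ x : E3, x ≠ y → x ≠ yI y → ∀ i : Fin 3,
      -- u^S
      ((∑ j : Fin 3, J x y i j * (![f 0, f 1, 0] j))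
        - (∑ j : Fin 3, J x (yI y) i j * (![f 0, f 1, 0] j)))
      -- u^D
      + (x 2 * pd i (fun x => ∑ j : Fin 3,
            GD x (yI y) j * (y 2 * (![-(f 0), -(f 1), f 2] j))) x
         - (∑ j : Fin 3, GD x (yI y) j * (y 2 * (![-(f 0), -(f 1), f 2] j)))
           * (if i = 2 then (1 : ℝ) else 0))
      -- u^{L1}
      + (-(1 / 2) * (x 2 * pd i (fun x => GS x y * f 2 - GS x (yI y) * f 2) x
          - (GS x y * f 2 - GS x (yI y) * f 2) * (if i = 2 then (1 : ℝ) else 0)))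
      -- u^{L2}
      + ((1 / 2) * pd i (fun x => GS x y * (f 2 * y 2) - GS x (yI y) * (f 2 * y 2)) x)
      =
      -- original image system
      (∑ j : Fin 3, J x y i j * f j) - (∑ j : Fin 3, J x (yI y) i j * fI f j)
      - (x 2 * pd i (fun x =>
            GS x (yI y) * (-(f 2)) + ∑ j : Fin 3, GD x (yI y) j * (y 2 * fI f j)) x
         - (GS x (yI y) * (-(f 2)) + ∑ j : Fin 3, GD x (yI y) j * (y 2 * fI f j))
           * (if i = 2 then (1 : ℝ) else 0)) :=
  stmt11_general y f
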